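/- Let P ≥ 1 and M ≥ 1, let A : ℝ^P → ℝ^M be a linear map, let Γ be a symmetric positive definite M × M real matrix, and let y ∈ ℝ^M. Define Φ(u) = (1/2) ⟨Γ^{-1}(y − Au), y − Au⟩, so that ∇Φ(u) = Aᵀ Γ^{-1}(Au − y). Let J ≥ 1, let u^{(1)},…,u^{(J)} ∈ ℝ^P, set ū = (1/J) Σ_{l=1}^J u^{(l)}, Ḡ = (1/J) Σ_{l=1}^J A u^{(l)}, and let C(u) : ℝ^P → ℝ^P be the empirical covariance operator C(u) v = (1/J) Σ_{k=1}^J ⟨u^{(k)} − ū, v⟩ (u^{(k)} − ū). Then for every j ∈ {1,…,J}, the Ensemble Kalman Inversion drift satisfies −(1/J) Σ_{k=1}^J ⟨A u^{(k)} − Ḡ, Γ^{-1}(A u^{(j)} − y)⟩ u^{(k)} = −C(u) ∇Φ(u^{(j)}). -/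

import Mathlib

/-!
With `w = Γ⁻¹(Au⁽ʲ⁾ - y)`, transposition gives `⟨u⁽ᵏ⁾ - ū, Aᵀw⟩ = ⟨Au⁽ᵏ⁾ - Ḡ, w⟩` because `Aū = Ḡ`.
These coefficients are centred, so they sum to zero and centring the `u⁽ᵏ⁾` in the weighted
sum changes nothing.
-/

open Finset Matrix

theorem sum_sub_mean_eq_zero {ι K E : Type*} [Fintype ι] [DivisionRing K] [CharZero K]
    [AddCommGroup E] [Module K E] (v : ι → E) :
    ∑ i, (v i - (1 / Fintype.card ι : K) • ∑ l, v l) = 0 := by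
  rcases isEmpty_or_nonempty ι with _ | _
  · simp
  · rw [sum_sub_distrib, sum_const, card_univ, ← Nat.cast_smul_eq_nsmul K, smul_smul,
      mul_one_div_cancel (Nat.cast_ne_zero.mpr Fintype.card_ne_zero), one_smul, sub_self]

theorem sum_smul_sub_eq_of_sum_eq_zero {ι R E : Type*} [Ring R] [AddCommGroup E] [Module R E]
    (s : Finset ι) {c : ι → R} (hc : ∑ i ∈ s, c i = 0) (v : ι → E) (w : E) :
    ∑ i ∈ s, c i • (v i - w) = ∑ i ∈ s, c i • v i := by
  simp only [smul_sub, sum_sub_distrib, ← sum_smul, hc, zero_smul, sub_zero]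

theorem eki_linear_precond_gradient_descent_general {P M : ℕ}
    (A : Matrix (Fin M) (Fin P) ℝ)
    (Γ : Matrix (Fin M) (Fin M) ℝ)
    (y : Fin M → ℝ)
    (gradPhi : (Fin P → ℝ) → (Fin P → ℝ))
    (hgradPhi : ∀ v, gradPhi v = Aᵀ *ᵥ (Γ⁻¹ *ᵥ (A *ᵥ v - y)))
    {J : ℕ} (u : Fin J → (Fin P → ℝ))
    (ubar : Fin P → ℝ) (hubar : ubar = (1 / J : ℝ) • ∑ l, u l)
    (Gbar : Fin M → ℝ) (hGbar : Gbar = (1 / J : ℝ) • ∑ l, A *ᵥ u l)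
    (C : (Fin P → ℝ) → (Fin P → ℝ))
    (hC : ∀ v, C v = (1 / J : ℝ) • ∑ k, ((u k - ubar) ⬝ᵥ v) • (u k - ubar)) :
    ∀ j, -((1 / J : ℝ) • ∑ k, ((A *ᵥ u k - Gbar) ⬝ᵥ (Γ⁻¹ *ᵥ (A *ᵥ u j - y))) • u k)
      = -(C (gradPhi (u j))) := by
  intro j
  set w := Γ⁻¹ *ᵥ (A *ᵥ u j - y)
  have hmean : A *ᵥ ubar = Gbar := by rw [hubar, hGbar, mulVec_smul, mulVec_sum]
  have hcoeff (k : Fin J) : (u k - ubar) ⬝ᵥ gradPhi (u j) = (A *ᵥ u k - Gbar) ⬝ᵥ w := by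
    rw [hgradPhi, dotProduct_transpose_mulVec, dotProduct_comm, mulVec_sub, hmean]
  have hsum : ∑ k, (A *ᵥ u k - Gbar) ⬝ᵥ w = 0 := by
    have hdev := sum_sub_mean_eq_zero (K := ℝ) (fun k => A *ᵥ u k)
    rw [Fintype.card_fin] at hdev
    rw [← sum_dotProduct, hGbar, hdev, zero_dotProduct]
  simp only [hC, hcoeff, sum_smul_sub_eq_of_sum_eq_zero _ hsum]

/-- In the linear case `G(u) = Au` with Gaussian noise covariance
`Γ`, the EKI drift is a preconditioned gradient descent for
`Φ(u) = (1/2)⟨Γ⁻¹(y − Au), y − Au⟩` (whose gradient is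
`∇Φ(u) = Aᵀ Γ⁻¹(Au − y)`), with preconditioner the empirical covariance
`C(u)v = (1/J) ∑_k ⟨u^{(k)} − ū, v⟩ (u^{(k)} − ū)`:
`−(1/J) ∑_k ⟨Au^{(k)} − Ḡ, Γ⁻¹(Au^{(j)} − y)⟩ u^{(k)} = −C(u)∇Φ(u^{(j)})`. -/
theorem eki_linear_precond_gradient_descent {P M : ℕ} (hP : 1 ≤ P) (hM : 1 ≤ M)
    (A : Matrix (Fin M) (Fin P) ℝ)
    (Γ : Matrix (Fin M) (Fin M) ℝ) (hΓ : Γ.PosDef)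
    (y : Fin M → ℝ)
    (Phi : (Fin P → ℝ) → ℝ)
    (hPhi : ∀ v, Phi v = (1 / 2) * ((Γ⁻¹ *ᵥ (y - A *ᵥ v)) ⬝ᵥ (y - A *ᵥ v)))
    (gradPhi : (Fin P → ℝ) → (Fin P → ℝ))
    (hgradPhi : ∀ v, gradPhi v = Aᵀ *ᵥ (Γ⁻¹ *ᵥ (A *ᵥ v - y)))
    {J : ℕ} (hJ : 1 ≤ J) (u : Fin J → (Fin P → ℝ))
    (ubar : Fin P → ℝ) (hubar : ubar = (1 / J : ℝ) • ∑ l, u l)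
    (Gbar : Fin M → ℝ) (hGbar : Gbar = (1 / J : ℝ) • ∑ l, A *ᵥ u l)
    (C : (Fin P → ℝ) → (Fin P → ℝ))
    (hC : ∀ v, C v = (1 / J : ℝ) • ∑ k, ((u k - ubar) ⬝ᵥ v) • (u k - ubar)) :
    ∀ j, -((1 / J : ℝ) • ∑ k, ((A *ᵥ u k - Gbar) ⬝ᵥ (Γ⁻¹ *ᵥ (A *ᵥ u j - y))) • u k)
      = -(C (gradPhi (u j))) :=
  eki_linear_precond_gradient_descent_general A Γ y gradPhi hgradPhi u ubar hubar Gbar hGbar C hC
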